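/- In the heteroscedastic model, for Y_i = X_i − X̄: E(Y_i Y_{i'}) = ∑_{u≠∅} ( 1{i_u=i'_u} σ²_{i,u} − ν_{i,u}σ²_{i,u} − ν_{i',u}σ²_{i',u} + \overline{ν_u σ²_u} ), where \overline{ν_u σ²_u} = (1/N)∑_i Z_i ν_{i,u} σ²_{i,u}. -/

import Mathlib

/-!
Writing `w k = Z k / N`, the weights sum to one, so `μ` cancels in `X i - X̄` and
`Y i = ∑_{u ≠ ∅} δ i u` with `δ a u = ε a u - ∑ k, w k • ε k u`. The covariance
`(f, g) ↦ E (f g)` is bilinear, so `E (Y i Y i')` splits into the terms `E (δ i u δ i' u')`,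
which vanish for `u ≠ u'`. For `u = u'` the four terms of the expansion of `E (δ i u δ i' u)` are
the four terms of the formula; the third one is `ν i' u σ² i' u` because `σ² k u` depends on `k`
only through `k_u`.
-/

open Finset

lemma finsum_mul_eq_sum_toFinset {ι R : Type*} [NonUnitalNonAssocSemiring R] {Z : ι → R}
    (hZ : (Function.support Z).Finite) (g : ι → R) :
    ∑ᶠ k, Z k * g k = ∑ k ∈ hZ.toFinset, Z k * g k :=
  finsum_eq_sum_of_support_subset _ <| by
    simpa using Function.support_mul_subset_left Z g

lemma sub_sum_smul_eq_sum_sub_sum_smul {ι κ R M : Type*} [Ring R] [AddCommGroup M] [Module R M]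
    {s : Finset ι} {w : ι → R} (hw : ∑ k ∈ s, w k = 1) (T : Finset κ) (c : M) {x : ι → M}
    {e : ι → κ → M} (hx : ∀ k, x k = c + ∑ u ∈ T, e k u) (a : ι) :
    x a - ∑ k ∈ s, w k • x k = ∑ u ∈ T, (e a u - ∑ k ∈ s, w k • e k u) := by
  simp only [hx, smul_add, sum_add_distrib, ← sum_smul, hw, one_smul, smul_sum,
    sum_sub_distrib]
  rw [sum_comm]
  abel

lemma LinearMap.map_sub_sum_smul_sub_sum_smul₂ {ι R M N P : Type*} [CommRing R]
    [AddCommGroup M] [AddCommGroup N] [AddCommGroup P] [Module R M] [Module R N] [Module R P]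
    (B : M →ₗ[R] N →ₗ[R] P) (s : Finset ι) (w : ι → R) (x : M) (x' : ι → M) (y : N)
    (y' : ι → N) :
    B (x - ∑ k ∈ s, w k • x' k) (y - ∑ k ∈ s, w k • y' k)
      = B x y - ∑ k ∈ s, w k • B x (y' k) - ∑ k ∈ s, w k • B (x' k) y
        + ∑ k ∈ s, ∑ k' ∈ s, (w k * w k') • B (x' k) (y' k') := by
  simp only [map_sub, map_sum, map_smul, LinearMap.sub_apply, LinearMap.sum_apply,
    LinearMap.smul_apply, smul_sub, sum_sub_distrib, smul_sum, smul_smul]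
  rw [sum_comm (f := fun k' k => (w k' * w k) • B (x' k) (y' k'))]
  simp only [mul_comm (w _) (w _)]
  abel

def secondMomentForm {Ω : Type*} (E : (Ω → ℝ) →ₗ[ℝ] ℝ) : (Ω → ℝ) →ₗ[ℝ] (Ω → ℝ) →ₗ[ℝ] ℝ :=
  (LinearMap.mul ℝ (Ω → ℝ)).compr₂ E

lemma secondMomentForm_apply {Ω : Type*} (E : (Ω → ℝ) →ₗ[ℝ] ℝ) (f g : Ω → ℝ) :
    secondMomentForm E f g = E (fun ω => f ω * g ω) := rfl

section WeightedRelation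

variable {ι : Type*} (s : Finset ι) (w : ι → ℝ) {R : ι → ι → Prop} [DecidableRel R]

lemma sum_mul_mul_ite_of_symmetric (hR : ∀ a b, R a b → R b a) {σ : ι → ℝ}
    (hσ : ∀ a b, R a b → σ a = σ b) (b : ι) :
    ∑ k ∈ s, w k * (σ k * if R k b then 1 else 0)
      = σ b * ∑ k ∈ s, w k * (if R b k then 1 else 0) := by
  rw [mul_sum]
  refine sum_congr rfl fun k _ => ?_
  by_cases h : R k b
  · rw [if_pos h, if_pos (hR k b h), hσ k b h]
    ring
  · rw [if_neg h, if_neg fun h' => h (hR b k h')]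
    ring

lemma centered_covariance_of_symmetric (hR : ∀ a b, R a b → R b a) {σ ν : ι → ℝ}
    (hσ : ∀ a b, R a b → σ a = σ b) (hν : ∀ a, ν a = ∑ k ∈ s, w k * (if R a k then 1 else 0))
    (a b : ι) :
    σ a * (if R a b then 1 else 0)
        - ∑ k ∈ s, w k * (σ a * if R a k then 1 else 0)
        - ∑ k ∈ s, w k * (σ k * if R k b then 1 else 0)
        + ∑ k ∈ s, ∑ k' ∈ s, w k * w k' * (σ k * if R k k' then 1 else 0)
      = (if R a b then 1 else 0) * σ a - ν a * σ a - ν b * σ b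
        + ∑ k ∈ s, w k * (ν k * σ k) := by
  have hrow : ∀ c, ∑ k ∈ s, w k * (σ c * if R c k then 1 else 0) = ν c * σ c := by
    intro c
    rw [hν, sum_mul]
    exact sum_congr rfl fun k _ => by ring
  have hdouble : ∀ k, ∑ k' ∈ s, w k * w k' * (σ k * if R k k' then 1 else 0)
      = w k * (ν k * σ k) := by
    intro k
    simp only [mul_assoc, ← mul_sum, hrow]
  rw [hrow, sum_mul_mul_ite_of_symmetric s w hR hσ, ← hν, sum_congr rfl fun k _ => hdouble k]
  ring

end WeightedRelation

theorem stmt17_general {r : ℕ} {Ω : Type*}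
    (E : (Ω → ℝ) →ₗ[ℝ] ℝ)
    (Z : (Fin r → ℕ) → ℝ)
    (hZfin : (Function.support Z).Finite)
    (N : ℝ) (hN : N = ∑ᶠ i, Z i) (hNpos : 0 < N)
    (μ : ℝ) (σ2 : (Fin r → ℕ) → Finset (Fin r) → ℝ)
    (ε : (Fin r → ℕ) → Finset (Fin r) → Ω → ℝ)
    (hσdep : ∀ i i' u, (∀ j ∈ u, i j = i' j) → σ2 i u = σ2 i' u)
    (hcov : ∀ i i' u u', u.Nonempty → u'.Nonempty →
      E (fun ω => ε i u ω * ε i' u' ω)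
        = σ2 i u * (if u = u' ∧ ∀ j ∈ u, i j = i' j then (1 : ℝ) else 0))
    (X : (Fin r → ℕ) → Ω → ℝ)
    (hX : ∀ i ω, X i ω = μ + ∑ u ∈ Finset.univ.erase (∅ : Finset (Fin r)), ε i u ω)
    (Nmatch : (Fin r → ℕ) → Finset (Fin r) → ℝ)
    (hNmatch : ∀ i u, Nmatch i u
      = ∑ᶠ i', Z i' * (if ∀ j ∈ u, i j = i' j then (1 : ℝ) else 0))
    (νi : (Fin r → ℕ) → Finset (Fin r) → ℝ)
    (hνi : ∀ i u, νi i u = Nmatch i u / N)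
    (νσbar : Finset (Fin r) → ℝ)
    (hνσbar : ∀ u, νσbar u = (1 / N) * ∑ᶠ i, Z i * (νi i u * σ2 i u))
    (Xbar : Ω → ℝ)
    (hXbar : ∀ ω, Xbar ω = (1 / N) * ∑ᶠ i, Z i * X i ω)
    (i i' : Fin r → ℕ) :
    E (fun ω => (X i ω - Xbar ω) * (X i' ω - Xbar ω))
      = ∑ u ∈ Finset.univ.erase (∅ : Finset (Fin r)),
          ((if ∀ j ∈ u, i j = i' j then (1 : ℝ) else 0) * σ2 i u
            - νi i u * σ2 i u - νi i' u * σ2 i' u + νσbar u) := by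
  set s := hZfin.toFinset
  set w : (Fin r → ℕ) → ℝ := fun k => Z k / N
  have hfin : ∀ g : (Fin r → ℕ) → ℝ, ∑ᶠ k, Z k * g k = ∑ k ∈ s, Z k * g k :=
    finsum_mul_eq_sum_toFinset hZfin
  have hw : ∑ k ∈ s, w k = 1 := by
    have hNs : N = ∑ k ∈ s, Z k := by simpa [← hN] using hfin fun _ => 1
    rw [← sum_div, ← hNs, div_self hNpos.ne']
  have hν : ∀ a u, νi a u = ∑ k ∈ s, w k * if ∀ j ∈ u, a j = k j then 1 else 0 := by
    intro a u
    simp only [hνi, hNmatch, hfin, sum_div, w, div_mul_eq_mul_div]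
  have hνσ : ∀ u, νσbar u = ∑ k ∈ s, w k * (νi k u * σ2 k u) := by
    intro u
    simp only [hνσbar, hfin, mul_sum, w]
    exact sum_congr rfl fun k _ => by ring
  have hXbar' : Xbar = ∑ k ∈ s, w k • X k := by
    funext ω
    simp only [hXbar, hfin, mul_sum, Finset.sum_apply, Pi.smul_apply, smul_eq_mul, w]
    exact sum_congr rfl fun k _ => by ring
  have hY := sub_sum_smul_eq_sum_sub_sum_smul hw (univ.erase ∅) (fun _ => μ) (x := X) (e := ε)
    (fun k => funext fun ω => by simp only [hX, Pi.add_apply, Finset.sum_apply])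
  change secondMomentForm E (X i - Xbar) (X i' - Xbar) = _
  rw [hXbar', hY, hY, map_sum (secondMomentForm E), LinearMap.sum_apply]
  refine sum_congr rfl fun u hu => ?_
  have hu0 : u.Nonempty := nonempty_iff_ne_empty.mpr (ne_of_mem_erase hu)
  rw [map_sum, sum_eq_single_of_mem u hu]
  · rw [LinearMap.map_sub_sum_smul_sub_sum_smul₂]
    simp only [secondMomentForm_apply, hcov _ _ _ _ hu0 hu0, true_and, smul_eq_mul, hνσ]
    exact centered_covariance_of_symmetric s w (R := fun a b => ∀ j ∈ u, a j = b j)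
      (fun _ _ h j hj => (h j hj).symm) (hσdep · · u) (hν · u) i i'
  · intro u' hu' hne
    have hu'0 : u'.Nonempty := nonempty_iff_ne_empty.mpr (ne_of_mem_erase hu')
    rw [LinearMap.map_sub_sum_smul_sub_sum_smul₂]
    simp [secondMomentForm_apply, hcov _ _ _ _ hu0 hu'0, Ne.symm hne]

/-- Lemma 2 (heteroscedastic model): with `Y_i = X_i − X̄`,
`E(Y_i Y_{i'}) = ∑_{u≠∅} (1{i_u=i'_u} σ²_{i,u} − ν_{i,u}σ²_{i,u} − ν_{i',u}σ²_{i',u}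
 + \overline{ν_u σ²_u})`. -/
theorem stmt17 {r : ℕ} (hr : 1 ≤ r) {Ω : Type*}
    (E : (Ω → ℝ) →ₗ[ℝ] ℝ) (hE1 : E (fun _ => 1) = 1)
    (Z : (Fin r → ℕ) → ℝ)
    (hZ01 : ∀ i, Z i = 0 ∨ Z i = 1)
    (hZfin : (Function.support Z).Finite)
    (N : ℝ) (hN : N = ∑ᶠ i, Z i) (hNpos : 0 < N)
    (μ : ℝ) (σ2 : (Fin r → ℕ) → Finset (Fin r) → ℝ)
    (ε : (Fin r → ℕ) → Finset (Fin r) → Ω → ℝ)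
    (hdep : ∀ i i' u, (∀ j ∈ u, i j = i' j) → ε i u = ε i' u)
    (hσdep : ∀ i i' u, (∀ j ∈ u, i j = i' j) → σ2 i u = σ2 i' u)
    (hmean : ∀ i u, u.Nonempty → E (ε i u) = 0)
    (hcov : ∀ i i' u u', u.Nonempty → u'.Nonempty →
      E (fun ω => ε i u ω * ε i' u' ω)
        = σ2 i u * (if u = u' ∧ ∀ j ∈ u, i j = i' j then (1 : ℝ) else 0))
    (X : (Fin r → ℕ) → Ω → ℝ)
    (hX : ∀ i ω, X i ω = μ + ∑ u ∈ Finset.univ.erase (∅ : Finset (Fin r)), ε i u ω)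
    (Nmatch : (Fin r → ℕ) → Finset (Fin r) → ℝ)
    (hNmatch : ∀ i u, Nmatch i u
      = ∑ᶠ i', Z i' * (if ∀ j ∈ u, i j = i' j then (1 : ℝ) else 0))
    (νi : (Fin r → ℕ) → Finset (Fin r) → ℝ)
    (hνi : ∀ i u, νi i u = Nmatch i u / N)
    (νσbar : Finset (Fin r) → ℝ)
    (hνσbar : ∀ u, νσbar u = (1 / N) * ∑ᶠ i, Z i * (νi i u * σ2 i u))
    (Xbar : Ω → ℝ)
    (hXbar : ∀ ω, Xbar ω = (1 / N) * ∑ᶠ i, Z i * X i ω)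
    (i i' : Fin r → ℕ) :
    E (fun ω => (X i ω - Xbar ω) * (X i' ω - Xbar ω))
      = ∑ u ∈ Finset.univ.erase (∅ : Finset (Fin r)),
          ((if ∀ j ∈ u, i j = i' j then (1 : ℝ) else 0) * σ2 i u
            - νi i u * σ2 i u - νi i' u * σ2 i' u + νσbar u) :=
  stmt17_general E Z hZfin N hN hNpos μ σ2 ε hσdep hcov X hX Nmatch hNmatch νi hνi νσbar hνσbar Xbar
    hXbar i i'
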